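/- Let G be a group with a G-invariant σ-algebra, μ a probability measure on G, and (α_n)_{n≥0} non-negative reals with Σ α_n = 1 and α_1 > 0. Let θ = Σ_{n≥0} α_n μ^{*n}. Then H^∞(G,μ) = H^∞(G,θ): a bounded measurable function is μ-harmonic if and only if it is θ-harmonic. -/

import Mathlib

open MeasureTheory Filter ProbabilityTheory
open scoped ENNReal NNReal

noncomputable def mconv {G : Type*} [Mul G] [MeasurableSpace G] (μ ν : Measure G) : Measure G :=
  (μ.prod ν).map (fun p => p.1 * p.2)

noncomputable def mconvPow {G : Type*} [Monoid G] [MeasurableSpace G] (μ : Measure G) : ℕ → Measure G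
  | 0 => Measure.dirac 1
  | n+1 => mconv (mconvPow μ n) μ

noncomputable def tvDist {α : Type*} [MeasurableSpace α] (μ ν : Measure α) : ℝ :=
  ⨆ A : Set α, |(μ A).toReal - (ν A).toReal|

noncomputable def tildeMeasure {G : Type*} [Monoid G] [MeasurableSpace G] (μ : Measure G) : Measure G :=
  Measure.sum (fun n => ((2:ℝ≥0∞)^(n+1))⁻¹ • mconvPow μ n)
/-!
Write `P f (g) = ∫ f(gγ) dμ(γ)` (`markovOp`) and `Q = Σ αₙ Pⁿ` (`markovSeriesOp`), so that
θ-harmonic means `Q f = f`. If `f` is bounded measurable with `Q f = f`, then `P` commutes with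
`Q`, so `w = P f - f` also satisfies `Q w = w`, while `Σ_{k<N} Pᵏ w = Pᴺ f - f` stays bounded.
Let `s = sup w`. Comparing `s - w = Σ αₙ (s - Pⁿ w)` with its `n = 1` term gives
`α₁ (s - P w) ≤ s - w`, hence `α₁ᵏ (s - Pᵏ w) ≤ s - w`: at a point where `w` is close enough to
`s`, the first `N` values `Pᵏ w` all exceed `s / 2`. Boundedness of their sum forces `s ≤ 0`,
i.e. `P f ≤ f`; applied to `-f` this gives `P f = f`. Complex functions are handled through their
real and imaginary parts.
-/

section MarkovOperator

variable {G : Type*} [Mul G] [MeasurableSpace G]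

def IsHarmonic {E : Type*} [NormedAddCommGroup E] [NormedSpace ℝ E] (ν : Measure G)
    (h : G → E) : Prop :=
  ∀ g, h g = ∫ γ, h (g * γ) ∂ν

noncomputable def markovOp (μ : Measure G) (f : G → ℝ) : G → ℝ := fun g => ∫ γ, f (g * γ) ∂μ

lemma isHarmonic_iff_markovOp_eq {μ : Measure G} {f : G → ℝ} :
    IsHarmonic μ f ↔ markovOp μ f = f :=
  ⟨fun h => funext fun g => (h g).symm, fun h g => (congrFun h g).symm⟩

lemma markovOp_neg (μ : Measure G) (f : G → ℝ) : markovOp μ (-f) = -markovOp μ f :=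
  funext fun _ => integral_neg _

lemma iterate_markovOp_neg (μ : Measure G) (f : G → ℝ) (n : ℕ) :
    (markovOp μ)^[n] (-f) = -(markovOp μ)^[n] f := by
  induction n with
  | zero => rfl
  | succ n ih => rw [Function.iterate_succ_apply', Function.iterate_succ_apply', ih, markovOp_neg]

variable (μ : Measure G) [IsProbabilityMeasure μ] {f f₁ f₂ : G → ℝ} {C C₁ C₂ : ℝ}

lemma abs_markovOp_le (hb : ∀ x, |f x| ≤ C) (g : G) : |markovOp μ f g| ≤ C := by
  simpa [markovOp] using norm_integral_le_of_norm_le_const (μ := μ) (f := fun γ => f (g * γ))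
    (ae_of_all _ fun γ => hb (g * γ))

lemma abs_iterate_markovOp_le (hb : ∀ x, |f x| ≤ C) (n : ℕ) (g : G) :
    |(markovOp μ)^[n] f g| ≤ C := by
  induction n generalizing g with
  | zero => exact hb g
  | succ n ih => rw [Function.iterate_succ_apply']; exact abs_markovOp_le μ ih g

variable [MeasurableMul₂ G]

lemma integrable_comp_const_mul {E : Type*} [NormedAddCommGroup E] {ν : Measure G}
    [IsFiniteMeasure ν] {f : G → E} (hf : StronglyMeasurable f) {C : ℝ} (hb : ∀ x, ‖f x‖ ≤ C)
    (g : G) : Integrable (fun γ => f (g * γ)) ν :=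
  .of_bound (hf.comp_measurable (measurable_const_mul g)).aestronglyMeasurable C
    (ae_of_all _ fun _ => hb _)

lemma measurable_markovOp (hf : Measurable f) : Measurable (markovOp μ f) :=
  (hf.comp measurable_mul).stronglyMeasurable.integral_prod_right'.measurable

lemma measurable_iterate_markovOp (hf : Measurable f) (n : ℕ) :
    Measurable ((markovOp μ)^[n] f) := by
  induction n with
  | zero => exact hf
  | succ n ih => rw [Function.iterate_succ_apply']; exact measurable_markovOp μ ih

lemma markovOp_le_of_le (hf : Measurable f) (hb : ∀ x, |f x| ≤ C) {c : ℝ} (hc : ∀ x, f x ≤ c)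
    (g : G) : markovOp μ f g ≤ c := by
  calc markovOp μ f g ≤ ∫ _, c ∂μ :=
        integral_mono (integrable_comp_const_mul hf.stronglyMeasurable hb g)
          (integrable_const c) fun γ => hc (g * γ)
    _ = c := by simp

lemma iterate_markovOp_le_of_le (hf : Measurable f) (hb : ∀ x, |f x| ≤ C) {c : ℝ}
    (hc : ∀ x, f x ≤ c) (n : ℕ) (g : G) : (markovOp μ)^[n] f g ≤ c := by
  induction n generalizing g with
  | zero => exact hc g
  | succ n ih =>
    rw [Function.iterate_succ_apply']
    exact markovOp_le_of_le μ (measurable_iterate_markovOp μ hf n)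
      (abs_iterate_markovOp_le μ hb n) ih g

lemma markovOp_sub (hf₁ : Measurable f₁) (hb₁ : ∀ x, |f₁ x| ≤ C₁) (hf₂ : Measurable f₂)
    (hb₂ : ∀ x, |f₂ x| ≤ C₂) : markovOp μ (f₁ - f₂) = markovOp μ f₁ - markovOp μ f₂ :=
  funext fun g => integral_sub (integrable_comp_const_mul hf₁.stronglyMeasurable hb₁ g)
    (integrable_comp_const_mul hf₂.stronglyMeasurable hb₂ g)

lemma iterate_markovOp_sub (hf₁ : Measurable f₁) (hb₁ : ∀ x, |f₁ x| ≤ C₁)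
    (hf₂ : Measurable f₂) (hb₂ : ∀ x, |f₂ x| ≤ C₂) (n : ℕ) :
    (markovOp μ)^[n] (f₁ - f₂) = (markovOp μ)^[n] f₁ - (markovOp μ)^[n] f₂ := by
  induction n with
  | zero => rfl
  | succ n ih =>
    rw [Function.iterate_succ_apply', Function.iterate_succ_apply', Function.iterate_succ_apply',
      ih, markovOp_sub μ (measurable_iterate_markovOp μ hf₁ n) (abs_iterate_markovOp_le μ hb₁ n)
        (measurable_iterate_markovOp μ hf₂ n) (abs_iterate_markovOp_le μ hb₂ n)]

end MarkovOperator

section ConvolutionPowers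

variable {G : Type*} [Monoid G] [MeasurableSpace G] [MeasurableMul₂ G]

instance isProbabilityMeasure_mconvPow (μ : Measure G) [IsProbabilityMeasure μ] (n : ℕ) :
    IsProbabilityMeasure (mconvPow μ n) := by
  induction n with
  | zero => exact Measure.dirac.isProbabilityMeasure
  | succ n ih => exact Measure.isProbabilityMeasure_map measurable_mul.aemeasurable

variable (μ : Measure G) [IsProbabilityMeasure μ] {f : G → ℝ} {C : ℝ}

lemma integral_mconv_comp_const_mul (hf : Measurable f) (hb : ∀ x, |f x| ≤ C)
    (ν : Measure G) [IsFiniteMeasure ν] (g : G) :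
    ∫ γ, f (g * γ) ∂(mconv ν μ) = ∫ a, markovOp μ f (g * a) ∂ν := by
  have hint : Integrable (fun p : G × G => f (g * (p.1 * p.2))) (ν.prod μ) :=
    .of_bound (hf.comp ((measurable_fst.mul measurable_snd).const_mul g)).aestronglyMeasurable C
      (ae_of_all _ fun _ => hb _)
  have hfg : Measurable fun γ => f (g * γ) := hf.comp (measurable_const_mul g)
  rw [mconv, integral_map measurable_mul.aemeasurable hfg.aestronglyMeasurable,
    integral_prod _ hint]
  simp only [markovOp, mul_assoc]

lemma integral_mconvPow_comp_const_mul (hf : Measurable f) (hb : ∀ x, |f x| ≤ C) (n : ℕ)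
    (g : G) : ∫ γ, f (g * γ) ∂(mconvPow μ n) = (markovOp μ)^[n] f g := by
  induction n generalizing f with
  | zero =>
    have hfg : Measurable fun γ => f (g * γ) := hf.comp (measurable_const_mul g)
    rw [mconvPow, integral_dirac' _ _ hfg.stronglyMeasurable]
    simp
  | succ n ih =>
    rw [mconvPow, integral_mconv_comp_const_mul μ hf hb,
      ih (measurable_markovOp μ hf) (abs_markovOp_le μ hb), Function.iterate_succ_apply]

end ConvolutionPowers

lemma summable_of_tsum_eq_one {α : ℕ → ℝ} (hsum : ∑' n, α n = 1) : Summable α := by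
  by_contra hc
  simp [tsum_eq_zero_of_not_summable hc] at hsum

lemma le_one_of_tsum_eq_one {α : ℕ → ℝ} (hα : ∀ n, 0 ≤ α n) (hsum : ∑' n, α n = 1) (n : ℕ) :
    α n ≤ 1 :=
  hsum ▸ (summable_of_tsum_eq_one hsum).le_tsum n fun j _ => hα j

section Series

variable {G : Type*} [Monoid G] [MeasurableSpace G]

noncomputable def mconvSeries (μ : Measure G) (α : ℕ → ℝ) : Measure G :=
  Measure.sum fun n => ENNReal.ofReal (α n) • mconvPow μ n

noncomputable def markovSeriesOp (μ : Measure G) (α : ℕ → ℝ) (f : G → ℝ) : G → ℝ :=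
  fun g => ∑' n, α n * (markovOp μ)^[n] f g

variable (μ : Measure G) {α : ℕ → ℝ} {f f₁ f₂ : G → ℝ} {C C₁ C₂ : ℝ}

lemma markovSeriesOp_neg (f : G → ℝ) : markovSeriesOp μ α (-f) = -markovSeriesOp μ α f :=
  funext fun g => by
    simp only [markovSeriesOp, iterate_markovOp_neg, Pi.neg_apply, mul_neg, tsum_neg]

lemma markovSeriesOp_eq_self (hsum : ∑' n, α n = 1) (hf : markovOp μ f = f) :
    markovSeriesOp μ α f = f :=
  funext fun g => by
    simp [markovSeriesOp, Function.iterate_fixed hf, tsum_mul_right, hsum]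

variable [IsProbabilityMeasure μ] (hα : ∀ n, 0 ≤ α n) (hsum : ∑' n, α n = 1)
include hα hsum

omit hsum in
lemma abs_mul_iterate_markovOp_le (hb : ∀ x, |f x| ≤ C) (n : ℕ) (g : G) :
    |α n * (markovOp μ)^[n] f g| ≤ α n * C := by
  rw [abs_mul, abs_of_nonneg (hα n)]
  exact mul_le_mul_of_nonneg_left (abs_iterate_markovOp_le μ hb n g) (hα n)

lemma summable_mul_iterate_markovOp (hb : ∀ x, |f x| ≤ C) (g : G) :
    Summable fun n => α n * (markovOp μ)^[n] f g :=
  .of_norm_bounded ((summable_of_tsum_eq_one hsum).mul_right C) fun n =>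
    abs_mul_iterate_markovOp_le μ hα hb n g

variable [MeasurableMul₂ G]

lemma isProbabilityMeasure_mconvSeries : IsProbabilityMeasure (mconvSeries μ α) := by
  constructor
  simp only [mconvSeries, Measure.sum_apply _ MeasurableSet.univ, Measure.smul_apply,
    measure_univ, smul_eq_mul, mul_one]
  rw [← ENNReal.ofReal_tsum_of_nonneg hα (summable_of_tsum_eq_one hsum), hsum, ENNReal.ofReal_one]

lemma integral_mconvSeries_comp_const_mul (hf : Measurable f) (hb : ∀ x, |f x| ≤ C) (g : G) :
    ∫ γ, f (g * γ) ∂(mconvSeries μ α) = markovSeriesOp μ α f g := by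
  have := isProbabilityMeasure_mconvSeries μ hα hsum
  have hint := integrable_comp_const_mul (ν := mconvSeries μ α) hf.stronglyMeasurable hb g
  rw [mconvSeries] at hint ⊢
  rw [integral_sum_measure hint]
  refine tsum_congr fun n => ?_
  rw [integral_smul_measure, ENNReal.toReal_ofReal (hα n),
    integral_mconvPow_comp_const_mul μ hf hb, smul_eq_mul]

lemma isHarmonic_mconvSeries_iff_markovSeriesOp_eq (hf : Measurable f) (hb : ∀ x, |f x| ≤ C) :
    IsHarmonic (mconvSeries μ α) f ↔ markovSeriesOp μ α f = f := by
  simp only [IsHarmonic, integral_mconvSeries_comp_const_mul μ hα hsum hf hb, funext_iff,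
    eq_comm (a := f _)]

lemma markovOp_markovSeriesOp (hf : Measurable f) (hb : ∀ x, |f x| ≤ C) :
    markovOp μ (markovSeriesOp μ α f) = markovSeriesOp μ α (markovOp μ f) := by
  funext g
  have hterm_int : ∀ n, Integrable (fun γ => α n * (markovOp μ)^[n] f (g * γ)) μ := fun n =>
    (integrable_comp_const_mul (measurable_iterate_markovOp μ hf n).stronglyMeasurable
      (abs_iterate_markovOp_le μ hb n) g).const_mul (α n)
  have hterm_norm : ∀ n, ∫ γ, ‖α n * (markovOp μ)^[n] f (g * γ)‖ ∂μ ≤ α n * C := fun n =>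
    (integral_mono (hterm_int n).norm (integrable_const _)
      fun γ => abs_mul_iterate_markovOp_le μ hα hb n (g * γ)).trans_eq (by simp)
  simp only [markovOp, markovSeriesOp]
  rw [← integral_tsum_of_summable_integral_norm hterm_int
    (.of_nonneg_of_le (fun n => integral_nonneg fun _ => norm_nonneg _) hterm_norm
      ((summable_of_tsum_eq_one hsum).mul_right C))]
  refine tsum_congr fun n => ?_
  rw [integral_const_mul, ← Function.iterate_succ_apply, Function.iterate_succ_apply']
  rfl

lemma markovSeriesOp_sub (hf₁ : Measurable f₁) (hb₁ : ∀ x, |f₁ x| ≤ C₁) (hf₂ : Measurable f₂)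
    (hb₂ : ∀ x, |f₂ x| ≤ C₂) :
    markovSeriesOp μ α (f₁ - f₂) = markovSeriesOp μ α f₁ - markovSeriesOp μ α f₂ := by
  funext g
  simp only [markovSeriesOp, iterate_markovOp_sub μ hf₁ hb₁ hf₂ hb₂, Pi.sub_apply, mul_sub]
  exact (summable_mul_iterate_markovOp μ hα hsum hb₁ g).tsum_sub
    (summable_mul_iterate_markovOp μ hα hsum hb₂ g)

lemma markovSeriesOp_markovOp_sub_self (hf : Measurable f) (hb : ∀ x, |f x| ≤ C)
    (hfix : markovSeriesOp μ α f = f) :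
    markovSeriesOp μ α (markovOp μ f - f) = markovOp μ f - f := by
  rw [markovSeriesOp_sub μ hα hsum (measurable_markovOp μ hf) (abs_markovOp_le μ hb) hf hb,
    ← markovOp_markovSeriesOp μ hα hsum hf hb, hfix]

end Series

section MaximumPrinciple

variable {G : Type*} [Monoid G] [MeasurableSpace G] [MeasurableMul₂ G]
  (μ : Measure G) [IsProbabilityMeasure μ] {α : ℕ → ℝ} {f u : G → ℝ} {C s : ℝ}
  (hα : ∀ n, 0 ≤ α n) (hsum : ∑' n, α n = 1)
include hα hsum

lemma mul_sub_markovOp_le (hu : Measurable u) (hb : ∀ x, |u x| ≤ C)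
    (hfix : markovSeriesOp μ α u = u) (hs : ∀ x, u x ≤ s) (g : G) :
    α 1 * (s - markovOp μ u g) ≤ s - u g := by
  have hsummable : Summable fun n => α n * (s - (markovOp μ)^[n] u g) := by
    simp only [mul_sub]
    exact ((summable_of_tsum_eq_one hsum).mul_right s).sub
      (summable_mul_iterate_markovOp μ hα hsum hb g)
  have hexpand : s - u g = ∑' n, α n * (s - (markovOp μ)^[n] u g) := by
    simp only [mul_sub]
    rw [((summable_of_tsum_eq_one hsum).mul_right s).tsum_sub
      (summable_mul_iterate_markovOp μ hα hsum hb g), tsum_mul_right, hsum, one_mul]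
    exact congrArg (s - ·) (congrFun hfix g).symm
  rw [hexpand]
  exact hsummable.le_tsum 1 fun n _ =>
    mul_nonneg (hα n) (sub_nonneg.2 (iterate_markovOp_le_of_le μ hu hb hs n g))

lemma pow_mul_sub_iterate_markovOp_le (hu : Measurable u) (hb : ∀ x, |u x| ≤ C)
    (hfix : markovSeriesOp μ α u = u) (hs : ∀ x, u x ≤ s) (k : ℕ) (g : G) :
    α 1 ^ k * (s - (markovOp μ)^[k] u g) ≤ s - u g := by
  induction k generalizing u with
  | zero => simp
  | succ k ih =>
    have hPfix : markovSeriesOp μ α (markovOp μ u) = markovOp μ u := by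
      rw [← markovOp_markovSeriesOp μ hα hsum hu hb, hfix]
    calc α 1 ^ (k + 1) * (s - (markovOp μ)^[k + 1] u g)
        = α 1 * (α 1 ^ k * (s - (markovOp μ)^[k] (markovOp μ u) g)) := by
          rw [Function.iterate_succ_apply, pow_succ]; ring
      _ ≤ α 1 * (s - markovOp μ u g) :=
          mul_le_mul_of_nonneg_left (ih (measurable_markovOp μ hu) (abs_markovOp_le μ hb) hPfix
            (markovOp_le_of_le μ hu hb hs)) (hα 1)
      _ ≤ s - u g := mul_sub_markovOp_le μ hα hsum hu hb hfix hs g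

omit hα hsum in
lemma sum_range_iterate_markovOp_sub_self (hf : Measurable f) (hb : ∀ x, |f x| ≤ C) (N : ℕ)
    (g : G) :
    ∑ k ∈ Finset.range N, (markovOp μ)^[k] (markovOp μ f - f) g
      = (markovOp μ)^[N] f g - f g := by
  simp only [iterate_markovOp_sub μ (measurable_markovOp μ hf) (abs_markovOp_le μ hb) hf hb,
    Pi.sub_apply, ← Function.iterate_succ_apply]
  exact Finset.sum_range_sub (fun k => (markovOp μ)^[k] f g) N

variable (hα1 : 0 < α 1)
include hα1

lemma markovOp_le_of_markovSeriesOp_eq (hf : Measurable f) (hb : ∀ x, |f x| ≤ C)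
    (hfix : markovSeriesOp μ α f = f) (g : G) : markovOp μ f g ≤ f g := by
  set w := markovOp μ f - f
  have hwm : Measurable w := (measurable_markovOp μ hf).sub hf
  have hwb : ∀ x, |w x| ≤ C + C := fun x =>
    (abs_sub _ _).trans (add_le_add (abs_markovOp_le μ hb x) (hb x))
  have hwfix : markovSeriesOp μ α w = w := markovSeriesOp_markovOp_sub_self μ hα hsum hf hb hfix
  have hbdd : BddAbove (Set.range w) :=
    ⟨C + C, Set.forall_mem_range.2 fun x => (le_abs_self _).trans (hwb x)⟩
  set s := ⨆ x, w x
  have hws : ∀ x, w x ≤ s := le_ciSup hbdd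
  by_contra! hlt
  have hs : 0 < s := (sub_pos.2 hlt).trans_le (hws g)
  obtain ⟨N, hN⟩ := exists_nat_gt (4 * C / s)
  obtain ⟨x, hx⟩ : ∃ x, s - α 1 ^ N * (s / 2) < w x :=
    exists_lt_of_lt_ciSup (sub_lt_self s (by positivity))
  have hlarge : ∀ k ∈ Finset.range N, s / 2 ≤ (markovOp μ)^[k] w x := fun k hk => by
    have hkN : α 1 ^ N ≤ α 1 ^ k := pow_le_pow_of_le_one hα1.le
      (le_one_of_tsum_eq_one hα hsum 1) (Finset.mem_range.1 hk).le
    have hk_lt : α 1 ^ k * (s - (markovOp μ)^[k] w x) < α 1 ^ k * (s / 2) :=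
      calc _ ≤ s - w x := pow_mul_sub_iterate_markovOp_le μ hα hsum hwm hwb hwfix hws k x
        _ < α 1 ^ N * (s / 2) := by linarith
        _ ≤ α 1 ^ k * (s / 2) := mul_le_mul_of_nonneg_right hkN (by positivity)
    linarith [lt_of_mul_lt_mul_left hk_lt (pow_nonneg hα1.le k)]
  have hsum_le : N * (s / 2) ≤ C + C := by
    calc N * (s / 2) = ∑ _k ∈ Finset.range N, s / 2 := by simp
      _ ≤ ∑ k ∈ Finset.range N, (markovOp μ)^[k] w x := Finset.sum_le_sum hlarge
      _ = (markovOp μ)^[N] f x - f x := sum_range_iterate_markovOp_sub_self μ hf hb N x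
      _ ≤ C + C := by
          linarith [(abs_le.1 (abs_iterate_markovOp_le μ hb N x)).2, (abs_le.1 (hb x)).1]
  rw [div_lt_iff₀ hs] at hN
  linarith

lemma markovOp_eq_of_markovSeriesOp_eq (hf : Measurable f) (hb : ∀ x, |f x| ≤ C)
    (hfix : markovSeriesOp μ α f = f) : markovOp μ f = f := by
  funext g
  refine le_antisymm (markovOp_le_of_markovSeriesOp_eq μ hα hsum hα1 hf hb hfix g) ?_
  have hneg := markovOp_le_of_markovSeriesOp_eq μ hα hsum hα1 hf.neg
    (fun x => (abs_neg (f x)).trans_le (hb x)) (by rw [markovSeriesOp_neg, hfix]) g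
  rw [markovOp_neg] at hneg
  exact neg_le_neg_iff.1 hneg

lemma isHarmonic_mconvSeries_iff (hf : Measurable f) (hb : ∀ x, |f x| ≤ C) :
    IsHarmonic (mconvSeries μ α) f ↔ IsHarmonic μ f := by
  rw [isHarmonic_mconvSeries_iff_markovSeriesOp_eq μ hα hsum hf hb, isHarmonic_iff_markovOp_eq]
  exact ⟨markovOp_eq_of_markovSeriesOp_eq μ hα hsum hα1 hf hb,
    markovSeriesOp_eq_self μ hsum⟩

end MaximumPrinciple

lemma isHarmonic_iff_re_im {G : Type*} [Mul G] [MeasurableSpace G] {ν : Measure G} {h : G → ℂ}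
    (hint : ∀ g, Integrable (fun γ => h (g * γ)) ν) :
    IsHarmonic ν h ↔ IsHarmonic ν (fun x => (h x).re) ∧ IsHarmonic ν (fun x => (h x).im) := by
  simp only [IsHarmonic, Complex.ext_iff, ← forall_and]
  refine forall_congr' fun g => ?_
  have hre := integral_re (𝕜 := ℂ) (hint g)
  have him := integral_im (𝕜 := ℂ) (hint g)
  simp only [RCLike.re_to_complex, RCLike.im_to_complex] at hre him
  rw [hre, him]

/-- a convex combination `θ = Σ α_n μ^{*n}` with `α_1 > 0` has the same bounded
harmonic functions as `μ`. -/
theorem stmt7 {G : Type*} [Group G] [MeasurableSpace G] [MeasurableMul₂ G]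
    (μ : Measure G) [IsProbabilityMeasure μ]
    (α : ℕ → ℝ) (hα : ∀ n, 0 ≤ α n) (hsum : ∑' n, α n = 1) (hα1 : 0 < α 1)
    (θ : Measure G) (hθ : θ = Measure.sum (fun n => ENNReal.ofReal (α n) • mconvPow μ n))
    (h : G → ℂ) (hmeas : Measurable h) (hbdd : ∃ C, ∀ g, ‖h g‖ ≤ C) :
    (∀ g, h g = ∫ γ, h (g * γ) ∂μ) ↔ (∀ g, h g = ∫ γ, h (g * γ) ∂θ) := by
  obtain ⟨C, hC⟩ := hbdd
  change θ = mconvSeries μ α at hθ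
  subst hθ
  have := isProbabilityMeasure_mconvSeries μ hα hsum
  have hint : ∀ (ν : Measure G) [IsFiniteMeasure ν] g, Integrable (fun γ => h (g * γ)) ν :=
    fun ν _ => integrable_comp_const_mul hmeas.stronglyMeasurable hC
  change IsHarmonic μ h ↔ IsHarmonic (mconvSeries μ α) h
  have hre := isHarmonic_mconvSeries_iff μ hα hsum hα1 (f := fun x => (h x).re)
    (Complex.measurable_re.comp hmeas) fun x => (Complex.abs_re_le_norm (h x)).trans (hC x)
  have him := isHarmonic_mconvSeries_iff μ hα hsum hα1 (f := fun x => (h x).im)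
    (Complex.measurable_im.comp hmeas) fun x => (Complex.abs_im_le_norm (h x)).trans (hC x)
  rw [isHarmonic_iff_re_im (hint μ), isHarmonic_iff_re_im (hint _), hre, him]
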